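/- (Single-cluster lemma) Suppose 1 < k ≤ d. Define f(γ) = (−1)^{k−1} (∏_{i=1}^{k−1} λᵢ)^{−1} (γ − 1) ∏_{i=1}^{k−1} (γ − λᵢ). Then f(0) = −1, f(λ₁) = ⋯ = f(λ_{k−1}) = 0, and there exists z ∈ K_k(A, r₀) such that ‖r₀ − A z‖₂ ≤ ‖W‖₂ · ‖(f(λ_k), f(λ_{k+1}), …, f(λ_d))ᵀ‖₂. -/

import Mathlib

/-!
The residual polynomial `p(γ) = (1 - γ) ∏_{i<k-1} (1 - γ / λᵢ)` has degree at most `k`,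
satisfies `p(0) = 1`, vanishes at `λ₁, …, λ_{k-1}`, and `f = -p`. Writing `p = 1 - γ q(γ)`
with `deg q < k`, the vector `z = q(A) r₀` lies in `K_k(A, r₀)` and
`r₀ - A z = p(A) r₀ = ∑ cᵢ p(λᵢ) vᵢ = W (p(λᵢ))ᵢ`, whence
`‖r₀ - A z‖₂ ≤ ‖W‖₂ ‖(p(λᵢ))ᵢ‖₂`; the entries with `i < k - 1` vanish.
-/

noncomputable def euclNorm {m : ℕ} (x : Fin m → ℂ) : ℝ :=
  Real.sqrt (∑ t, ‖x t‖ ^ 2)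

noncomputable def l2OpNorm {m k : ℕ} (W : Matrix (Fin m) (Fin k) ℂ) : ℝ :=
  ‖LinearMap.toContinuousLinearMap (Matrix.toEuclideanLin W)‖

open Polynomial Matrix

namespace Matrix

variable {ι κ R : Type*} [Fintype ι] [DecidableEq ι] [Fintype κ] [CommRing R]

def krylov (A : Matrix ι ι R) (r : ι → R) (k : ℕ) : Submodule R (ι → R) :=
  Submodule.span R (Set.range fun j : Fin k => (A ^ (j : ℕ)) *ᵥ r)

theorem aeval_mulVec_of_mulVec_eq_smul {A : Matrix ι ι R} {w : ι → R} {μ : R}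
    (h : A *ᵥ w = μ • w) (p : R[X]) : aeval A p *ᵥ w = p.eval μ • w := by
  have := Module.End.aeval_apply_of_mem_apply_eq_smul (f := toLinAlgEquiv' A) (p := p)
    (by simpa using h)
  simpa [aeval_algHom_apply] using this

theorem aeval_mulVec_sum_smul_of_mulVec_eq_smul {A : Matrix ι ι R} {v : κ → ι → R}
    {lam : κ → R} (heig : ∀ i, A *ᵥ v i = lam i • v i) (c : κ → R) (p : R[X]) :
    aeval A p *ᵥ ∑ i, c i • v i = (of fun t i => c i * v i t) *ᵥ fun i => p.eval (lam i) := by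
  simp only [mulVec_sum, mulVec_smul, aeval_mulVec_of_mulVec_eq_smul (heig _), smul_smul]
  ext t
  simp only [Finset.sum_apply, Pi.smul_apply, smul_eq_mul, mulVec, dotProduct, of_apply]
  exact Finset.sum_congr rfl fun i _ => by ring

theorem aeval_mulVec_mem_krylov (A : Matrix ι ι R) (r : ι → R) {k : ℕ} {q : R[X]}
    (hq : q.degree < k) : aeval A q *ᵥ r ∈ krylov A r k := by
  rcases eq_or_ne q 0 with rfl | hq0
  · simp
  rw [aeval_eq_sum_range' ((natDegree_lt_iff_degree_lt hq0).2 hq), sum_mulVec]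
  refine Submodule.sum_mem _ fun j hj => ?_
  rw [smul_mulVec]
  exact Submodule.smul_mem _ _ (Submodule.subset_span ⟨⟨j, Finset.mem_range.1 hj⟩, rfl⟩)

theorem exists_mem_krylov_sub_mulVec_eq_aeval (A : Matrix ι ι R) (r : ι → R) {k : ℕ}
    {p : R[X]} (hdeg : p.degree ≤ k) (h0 : p.eval 0 = 1) :
    ∃ z ∈ krylov A r k, r - A *ᵥ z = aeval A p *ᵥ r := by
  set q := (1 - p).divX
  have hq : X * q = 1 - p := by
    have hcoeff : (1 - p).coeff 0 = 0 := by
      rw [coeff_zero_eq_eval_zero, eval_sub, eval_one, h0, sub_self]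
    conv_rhs => rw [← X_mul_divX_add (1 - p), hcoeff, map_zero, add_zero]
  refine ⟨aeval A q *ᵥ r, aeval_mulVec_mem_krylov A r ?_, ?_⟩
  · rcases eq_or_ne (1 - p) 0 with h | h
    · simp [q, h]
    · exact (degree_divX_lt h).trans_le ((degree_sub_le _ _).trans
        (max_le (degree_one_le.trans (by exact_mod_cast k.zero_le)) hdeg))
  · have hAq : A * aeval A q = aeval A (1 - p) := by rw [← hq, map_mul, aeval_X]
    rw [mulVec_mulVec, hAq, map_sub, map_one, sub_mulVec, one_mulVec, sub_sub_cancel]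

end Matrix

theorem euclNorm_eq_norm {m : ℕ} (x : Fin m → ℂ) : euclNorm x = ‖WithLp.toLp 2 x‖ := by
  rw [EuclideanSpace.norm_eq, euclNorm]

theorem euclNorm_mulVec_le {m k : ℕ} (W : Matrix (Fin m) (Fin k) ℂ) (x : Fin k → ℂ) :
    euclNorm (W *ᵥ x) ≤ l2OpNorm W * euclNorm x := by
  simpa [euclNorm_eq_norm, l2OpNorm] using
    (LinearMap.toContinuousLinearMap (toEuclideanLin W)).le_opNorm (WithLp.toLp 2 x)

theorem euclNorm_eq_sqrt_sum_filter {m : ℕ} {x : Fin m → ℂ} (s : Fin m → Prop)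
    [DecidablePred s] (hx : ∀ i, ¬ s i → x i = 0) :
    euclNorm x = √(∑ i ∈ Finset.univ.filter s, ‖x i‖ ^ 2) := by
  rw [euclNorm, Finset.sum_filter_of_ne]
  intro i _ hi
  by_contra h
  simp [hx i h] at hi

theorem exists_mem_krylov_euclNorm_sub_mulVec_le {n d k : ℕ} (A : Matrix (Fin n) (Fin n) ℂ)
    {v : Fin d → Fin n → ℂ} {lam : Fin d → ℂ} (heig : ∀ i, A *ᵥ v i = lam i • v i)
    (c : Fin d → ℂ) {p : ℂ[X]} (hdeg : p.degree ≤ k) (h0 : p.eval 0 = 1) :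
    ∃ z ∈ krylov A (∑ i, c i • v i) k,
      euclNorm (∑ i, c i • v i - A *ᵥ z) ≤
        l2OpNorm (of fun t i => c i * v i t) * euclNorm fun i => p.eval (lam i) := by
  obtain ⟨z, hz, hres⟩ := exists_mem_krylov_sub_mulVec_eq_aeval A (∑ i, c i • v i) hdeg h0
  refine ⟨z, hz, ?_⟩
  rw [hres, aeval_mulVec_sum_smul_of_mulVec_eq_smul heig]
  exact euclNorm_mulVec_le _ _

section ClusterResidualPoly

variable {K : Type*} [Field K] {m : ℕ}

noncomputable def clusterResidualPoly (μ : Fin m → K) : K[X] :=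
  (1 - X) * ∏ i, (1 - C (μ i)⁻¹ * X)

@[simp] theorem eval_zero_clusterResidualPoly (μ : Fin m → K) :
    (clusterResidualPoly μ).eval 0 = 1 := by
  simp [clusterResidualPoly, eval_prod]

theorem eval_clusterResidualPoly_of_ne_zero {μ : Fin m → K} {j : Fin m} (hj : μ j ≠ 0) :
    (clusterResidualPoly μ).eval (μ j) = 0 := by
  simp only [clusterResidualPoly, eval_mul, eval_prod]
  rw [Finset.prod_eq_zero (Finset.mem_univ j) (by simp [hj]), mul_zero]

theorem natDegree_clusterResidualPoly_le (μ : Fin m → K) :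
    (clusterResidualPoly μ).natDegree ≤ m + 1 := by
  have hfactor (a : K) : (1 - C a * X).natDegree ≤ 1 := by compute_degree
  rw [add_comm]
  refine natDegree_mul_le.trans (add_le_add (by compute_degree) ((natDegree_prod_le _ _).trans ?_))
  simpa using Finset.sum_le_card_nsmul Finset.univ _ 1 fun i _ => hfactor (μ i)⁻¹

theorem neg_eval_clusterResidualPoly {μ : Fin m → K} (hμ : ∀ i, μ i ≠ 0) (x : K) :
    (-1) ^ m * (∏ i, μ i)⁻¹ * ((x - 1) * ∏ i, (x - μ i)) =
      -(clusterResidualPoly μ).eval x := by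
  have hprod : (-1) ^ m * (∏ i, μ i)⁻¹ * ∏ i, (x - μ i) = ∏ i, (1 - (μ i)⁻¹ * x) := by
    rw [← Finset.prod_inv_distrib, ← Fin.prod_const, ← Finset.prod_mul_distrib,
      ← Finset.prod_mul_distrib]
    exact Finset.prod_congr rfl fun i _ => by field_simp [hμ i]; ring
  simp only [clusterResidualPoly, eval_mul, eval_prod, eval_sub, eval_one, eval_X, eval_C,
    ← hprod]
  ring

end ClusterResidualPoly

/-- single-cluster lemma: for `1 < k ≤ d` and
`f(γ) = (−1)^{k−1} (∏_{i=1}^{k−1} λᵢ)⁻¹ (γ − 1) ∏_{i=1}^{k−1} (γ − λᵢ)`, we have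
`f(0) = −1`, `f(λ₁) = ⋯ = f(λ_{k−1}) = 0`, and there is `z ∈ K_k(A, r₀)` with
`‖r₀ − A z‖₂ ≤ ‖W‖₂ ‖(f(λ_k),…,f(λ_d))ᵀ‖₂`. -/
theorem gmres_single_cluster_residual_bound
    (n d : ℕ) (A : Matrix (Fin n) (Fin n) ℂ)
    (v : Fin d → (Fin n → ℂ)) (lam : Fin d → ℂ) (c : Fin d → ℂ)
    (heig : ∀ i, A.mulVec (v i) = lam i • v i)
    (hnz : ∀ i, lam i ≠ 0)
    (r₀ : Fin n → ℂ) (hr₀ : r₀ = ∑ i, c i • v i)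
    (W : Matrix (Fin n) (Fin d) ℂ) (hW : W = Matrix.of fun t i => c i * v i t)
    (k : ℕ) (hk1 : 1 < k) (hkd : k ≤ d)
    (f : ℂ → ℂ)
    (hf : f = fun x => (-1 : ℂ) ^ (k - 1) *
        (∏ i : Fin (k - 1), lam (Fin.castLE (by omega) i))⁻¹ *
          ((x - 1) * ∏ i : Fin (k - 1), (x - lam (Fin.castLE (by omega) i)))) :
    f 0 = -1 ∧ (∀ i : Fin (k - 1), f (lam (Fin.castLE (by omega) i)) = 0) ∧
      ∃ z ∈ Submodule.span ℂ (Set.range fun j : Fin k => (A ^ (j : ℕ)).mulVec r₀),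
        euclNorm (r₀ - A.mulVec z) ≤
          l2OpNorm W *
            Real.sqrt (∑ i ∈ Finset.univ.filter (fun i : Fin d => k - 1 ≤ (i : ℕ)),
              ‖f (lam i)‖ ^ 2) := by
  set μ : Fin (k - 1) → ℂ := fun i => lam (Fin.castLE (by omega) i)
  set p := clusterResidualPoly μ
  have hfp (x : ℂ) : f x = -p.eval x := by
    rw [hf]
    exact neg_eval_clusterResidualPoly (fun i => hnz _) x
  have hroot (i : Fin (k - 1)) : p.eval (μ i) = 0 := eval_clusterResidualPoly_of_ne_zero (hnz _)
  refine ⟨by simp [hfp, p], fun i => by rw [hfp, hroot i, neg_zero], ?_⟩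
  have hdeg : p.degree ≤ k :=
    degree_le_of_natDegree_le ((natDegree_clusterResidualPoly_le μ).trans (by omega))
  obtain ⟨z, hz, hres⟩ :=
    exists_mem_krylov_euclNorm_sub_mulVec_le A heig c hdeg (eval_zero_clusterResidualPoly μ)
  subst hr₀ hW
  refine ⟨z, hz, hres.trans_eq ?_⟩
  rw [euclNorm_eq_sqrt_sum_filter (fun i : Fin d => k - 1 ≤ (i : ℕ))]
  · simp [hfp]
  · intro i hi
    exact hroot ⟨i, by omega⟩
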